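/- Pairwise-minimum exchangeability identity for HCP²: Let Z̃_1,…,Z̃_{K+1} be a hierarchically exchangeable sequence in 𝒵̃ in which every group size satisfies N_k ≥ 2 almost surely, let s : 𝒵 → ℝ be a fixed measurable score function, and let q' : 𝒵̃^{K+1} → ℝ be a measurable function that is invariant under any permutation of its K+1 group arguments and under any permutation of the entries within any single group argument. Then P( min{s(Z_{K+1,1}), s(Z_{K+1,2})} ≤ q'(Z̃_1,…,Z̃_{K+1}) ) = E[ (1/(K+1)) Σ_{k=1}^{K+1} (1/C(N_k,2)) Σ_{1 ≤ i < i' ≤ N_k} 1{ min{s(Z_{k,i}), s(Z_{k,i'})} ≤ q'(Z̃_1,…,Z̃_{K+1}) } ], where C(N,2) = N(N−1)/2. -/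

import Mathlib

open MeasureTheory ProbabilityTheory
open scoped ENNReal

noncomputable section

/-- Extend a permutation of `Fin m` to `ℕ` by the identity outside `{0, …, m-1}`. -/
def permExt {m : ℕ} (σ : Equiv.Perm (Fin m)) : ℕ → ℕ :=
  fun i => if h : i < m then (σ ⟨i, h⟩ : ℕ) else i

/-- The representation of the groups `0, …, L-1` of a hierarchical data set:
group `k` is recorded as the pair of its size `N k ω` and its sequence of observations. -/
def hierData {Ω 𝒵 : Type*} (L : ℕ) (N : ℕ → Ω → ℕ) (Z : ℕ → ℕ → Ω → 𝒵) :
    Ω → Fin L → ℕ × (ℕ → 𝒵) :=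
  fun ω k => (N k.1 ω, fun i => Z k.1 i ω)

/-- Hierarchical exchangeability (Definition 1.1) of the groups `0, …, L-1`:
(i) the groups are exchangeable with each other, and (ii) for each `k` and each `m`
with `P(N_k = m) > 0`, conditionally on `N_k = m` the first `m` observations within
group `k` are exchangeable. -/
def HierExch {Ω 𝒵 : Type*} [MeasurableSpace Ω] [MeasurableSpace 𝒵] (L : ℕ)
    (P : Measure Ω) (N : ℕ → Ω → ℕ) (Z : ℕ → ℕ → Ω → 𝒵) : Prop :=
  (∀ σ : Equiv.Perm (Fin L),
      Measure.map (fun ω => fun k : Fin L => hierData L N Z ω (σ k)) P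
        = Measure.map (hierData L N Z) P) ∧
  (∀ k, k < L → ∀ m : ℕ, 0 < P {ω | N k ω = m} → ∀ σ : Equiv.Perm (Fin m),
      Measure.map
          (hierData L N fun k' i => if k' = k then Z k' (permExt σ i) else Z k' i)
          (ProbabilityTheory.cond P {ω | N k ω = m})
        = Measure.map (hierData L N Z) (ProbabilityTheory.cond P {ω | N k ω = m}))

/-- An algorithm (or function) of `L` groups is hierarchically symmetric if its output is
unchanged by any permutation of its `L` group arguments and by any permutation of the
entries within any single group argument. -/
def HierInvariant {𝒵 β : Type*} (L : ℕ) (q : (Fin L → ℕ × (ℕ → 𝒵)) → β) : Prop :=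
  (∀ (d : Fin L → ℕ × (ℕ → 𝒵)) (σ : Equiv.Perm (Fin L)), q (fun k => d (σ k)) = q d) ∧
  (∀ (d : Fin L → ℕ × (ℕ → 𝒵)) (k : Fin L) (σ : Equiv.Perm (Fin (d k).1)),
      q (Function.update d k ((d k).1, fun i => (d k).2 (permExt σ i))) = q d)

/-!
Write `g k i i'` for the indicator of `min (s Z_{k,i}) (s Z_{k,i'}) ≤ q'`. Since `q'` is
invariant under permuting the groups, exchanging groups `k` and `K` gives `E[g k 0 1] = E[g K 0 1]`.
Since `q'` is invariant under permuting the entries of one group, conditioning on `N_k = m` and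
applying a permutation of `Fin m` that sends `0, 1` to `i, i'` shows that `g k i i'` and `g k 0 1`
have the same conditional expectation given `N_k = m`. Averaging over the `C(m, 2)` pairs (a
nonempty set since `N_k ≥ 2`), then over `m`, and finally over the groups gives the identity.
-/

section General

variable {α β : Type*} [MeasurableSpace α] [MeasurableSpace β] {μ : Measure α}

open Finset

lemma lintegral_comp_eq_of_map_eq {f g : α → β} (hf : Measurable f) (hg : Measurable g)
    (hfg : μ.map f = μ.map g) {h : β → ℝ≥0∞} (hh : Measurable h) :
    ∫⁻ a, h (f a) ∂μ = ∫⁻ a, h (g a) ∂μ := by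
  rw [← lintegral_map hh hf, hfg, lintegral_map hh hg]

lemma measure_mul_lintegral_cond {s : Set α} (hs : μ s ≠ ∞) (f : α → ℝ≥0∞) :
    μ s * ∫⁻ a, f a ∂μ[|s] = ∫⁻ a in s, f a ∂μ := by
  by_cases hs0 : μ s = 0
  · rw [hs0, zero_mul, setLIntegral_measure_zero _ _ hs0]
  · rw [ProbabilityTheory.cond, lintegral_smul_measure, smul_eq_mul, ← mul_assoc,
      ENNReal.mul_inv_cancel hs0 hs, one_mul]

lemma lintegral_eq_of_lintegral_cond_fiber_eq [IsFiniteMeasure μ] [Countable β]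
    [MeasurableSingletonClass β] {X : α → β} (hX : Measurable X) {f g : α → ℝ≥0∞}
    (h : ∀ b, 0 < μ (X ⁻¹' {b}) → ∫⁻ a, f a ∂μ[|X ⁻¹' {b}] = ∫⁻ a, g a ∂μ[|X ⁻¹' {b}]) :
    ∫⁻ a, f a ∂μ = ∫⁻ a, g a ∂μ := by
  have hfiber (F : α → ℝ≥0∞) :
      ∫⁻ a, F a ∂μ = ∑' b, μ (X ⁻¹' {b}) * ∫⁻ a, F a ∂μ[|X ⁻¹' {b}] := by
    have hcover : ⋃ b, X ⁻¹' {b} = Set.univ := by ext; simp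
    rw [← setLIntegral_univ, ← hcover,
      lintegral_iUnion (fun b => hX (measurableSet_singleton b)) (pairwise_disjoint_fiber X)]
    exact tsum_congr fun b => (measure_mul_lintegral_cond (measure_ne_top μ _) F).symm
  rw [hfiber f, hfiber g]
  refine tsum_congr fun b => ?_
  rcases eq_zero_or_pos (μ (X ⁻¹' {b})) with hb | hb
  · rw [hb, zero_mul, zero_mul]
  · rw [h b hb]

lemma lintegral_inv_card_mul_sum_eq {ι : Type*} {s : Finset ι} (hs : s.Nonempty)
    {f : ι → α → ℝ≥0∞} (hf : ∀ i ∈ s, AEMeasurable (f i) μ) {c : ℝ≥0∞}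
    (h : ∀ i ∈ s, ∫⁻ a, f i a ∂μ = c) :
    ∫⁻ a, (#s : ℝ≥0∞)⁻¹ * ∑ i ∈ s, f i a ∂μ = c := by
  have hs0 : (#s : ℝ≥0∞) ≠ 0 := by simpa using hs.ne_empty
  rw [lintegral_const_mul' _ _ (ENNReal.inv_ne_top.mpr hs0), lintegral_finsetSum' _ hf,
    sum_congr rfl h, sum_const, nsmul_eq_mul, ← mul_assoc,
    ENNReal.inv_mul_cancel hs0 (ENNReal.natCast_ne_top _), one_mul]

lemma card_sigma_range_Ico_succ (m : ℕ) :
    #((range m).sigma fun i => Ico (i + 1) m) = m.choose 2 := by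
  rw [card_sigma]
  simp only [Nat.card_Ico]
  calc ∑ i ∈ range m, (m - (i + 1)) = ∑ i ∈ range m, (m - 1 - i) :=
        sum_congr rfl fun i _ => by omega
    _ = ∑ i ∈ range m, i := sum_range_reflect id m
    _ = m.choose 2 := by rw [sum_range_id, Nat.choose_two_right]

lemma exists_permExt_zero_one {m i i' : ℕ} (hii' : i < i') (hi'm : i' < m) :
    ∃ σ : Equiv.Perm (Fin m), permExt σ 0 = i ∧ permExt σ 1 = i' := by
  have h0 : i' ≠ 0 := by omega
  have h1 : i' ≠ i := by omega
  refine ⟨Equiv.swap ⟨0, by omega⟩ ⟨i, by omega⟩ * Equiv.swap ⟨1, by omega⟩ ⟨i', hi'm⟩, ?_, ?_⟩ <;>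
    simp [permExt, Equiv.swap_apply_def, Fin.ext_iff, h0, h0.symm, h1, show 1 < m by omega,
      show m ≠ 0 by omega]

end General

section HierarchicalData

variable {Ω 𝒵 : Type*} {L : ℕ}

open Finset

def pairMinIndicator (s : 𝒵 → ℝ) (q' : (Fin L → ℕ × (ℕ → 𝒵)) → ℝ) (k : Fin L) (i i' : ℕ)
    (d : Fin L → ℕ × (ℕ → 𝒵)) : ℝ≥0∞ :=
  if min (s ((d k).2 i)) (s ((d k).2 i')) ≤ q' d then 1 else 0

def pairMinAverage (s : 𝒵 → ℝ) (q' : (Fin L → ℕ × (ℕ → 𝒵)) → ℝ) (k : Fin L)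
    (d : Fin L → ℕ × (ℕ → 𝒵)) : ℝ≥0∞ :=
  (((d k).1.choose 2 : ℕ) : ℝ≥0∞)⁻¹ *
    ∑ i ∈ range (d k).1, ∑ i' ∈ Ico (i + 1) (d k).1, pairMinIndicator s q' k i i' d

def permWithin (k : Fin L) {m : ℕ} (σ : Equiv.Perm (Fin m)) (d : Fin L → ℕ × (ℕ → 𝒵)) :
    Fin L → ℕ × (ℕ → 𝒵) :=
  Function.update d k ((d k).1, fun i => (d k).2 (permExt σ i))

lemma hierData_update_permExt (N : ℕ → Ω → ℕ) (Z : ℕ → ℕ → Ω → 𝒵) (k : Fin L) {m : ℕ}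
    (σ : Equiv.Perm (Fin m)) (ω : Ω) :
    hierData L N (fun k' i => if k' = k.1 then Z k' (permExt σ i) else Z k' i) ω =
      permWithin k σ (hierData L N Z ω) := by
  funext t
  by_cases ht : t = k
  · subst ht
    simp [hierData, permWithin]
  · have htk : t.1 ≠ k.1 := fun h => ht (Fin.ext h)
    simp [hierData, permWithin, ht, htk]

variable {s : 𝒵 → ℝ} {q' : (Fin L → ℕ × (ℕ → 𝒵)) → ℝ}

lemma HierInvariant.apply_permWithin (hq : HierInvariant L q') {d : Fin L → ℕ × (ℕ → 𝒵)}
    {k : Fin L} {m : ℕ} (hm : (d k).1 = m) (σ : Equiv.Perm (Fin m)) :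
    q' (permWithin k σ d) = q' d := by
  subst hm
  exact hq.2 d k σ

lemma pairMinIndicator_permWithin (hq : HierInvariant L q') {d : Fin L → ℕ × (ℕ → 𝒵)}
    {k : Fin L} {m : ℕ} (hm : (d k).1 = m) (σ : Equiv.Perm (Fin m)) (i i' : ℕ) :
    pairMinIndicator s q' k i i' (permWithin k σ d) =
      pairMinIndicator s q' k (permExt σ i) (permExt σ i') d := by
  rw [pairMinIndicator, pairMinIndicator, hq.apply_permWithin hm]
  simp only [permWithin, Function.update_self]

lemma pairMinIndicator_comp_perm (hq : HierInvariant L q') (d : Fin L → ℕ × (ℕ → 𝒵))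
    (σ : Equiv.Perm (Fin L)) (k : Fin L) (i i' : ℕ) :
    pairMinIndicator s q' k i i' (fun t => d (σ t)) = pairMinIndicator s q' (σ k) i i' d := by
  simp only [pairMinIndicator, hq.1 d σ]

variable [MeasurableSpace Ω] [MeasurableSpace 𝒵]

lemma measurable_hierData {N : ℕ → Ω → ℕ} {Z : ℕ → ℕ → Ω → 𝒵}
    (hN : ∀ k, Measurable (N k)) (hZ : ∀ k i, Measurable (Z k i)) :
    Measurable (hierData L N Z) :=
  measurable_pi_lambda _ fun k => (hN k).prodMk (measurable_pi_lambda _ fun i => hZ k i)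

lemma measurable_pairMinIndicator (hs : Measurable s) (hq : Measurable q') (k : Fin L)
    (i i' : ℕ) : Measurable (pairMinIndicator s q' k i i') := by
  have hentry (j : ℕ) : Measurable fun d : Fin L → ℕ × (ℕ → 𝒵) => s ((d k).2 j) :=
    hs.comp ((measurable_pi_apply j).comp (measurable_snd.comp (measurable_pi_apply k)))
  exact Measurable.ite (measurableSet_le ((hentry i).min (hentry i')) hq) measurable_const
    measurable_const

lemma measurable_pairMinAverage (hs : Measurable s) (hq : Measurable q') (k : Fin L) :
    Measurable (pairMinAverage s q' k) := by
  -- the group size `(d k).1` is discrete, so it suffices to fix it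
  have hfixed : Measurable fun p : (Fin L → ℕ × (ℕ → 𝒵)) × ℕ =>
      ((p.2.choose 2 : ℕ) : ℝ≥0∞)⁻¹ *
        ∑ i ∈ range p.2, ∑ i' ∈ Ico (i + 1) p.2, pairMinIndicator s q' k i i' p.1 :=
    measurable_from_prod_countable_left fun n => by
      dsimp only
      exact (Finset.measurable_sum _ fun i _ => Finset.measurable_sum _ fun i' _ =>
        measurable_pairMinIndicator hs hq k i i').const_mul _
  have hsize : Measurable fun d : Fin L → ℕ × (ℕ → 𝒵) => (d k).1 :=
    measurable_fst.comp (measurable_pi_apply k)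
  exact (hfixed.comp (measurable_id.prodMk hsize) :)

variable {P : Measure Ω} {N : ℕ → Ω → ℕ} {Z : ℕ → ℕ → Ω → 𝒵}

lemma HierExch.lintegral_pairMinIndicator_eq (hexch : HierExch L P N Z)
    (hN : ∀ k, Measurable (N k)) (hZ : ∀ k i, Measurable (Z k i)) (hs : Measurable s)
    (hq : Measurable q') (hqinv : HierInvariant L q') (j k : Fin L) (i i' : ℕ) :
    ∫⁻ ω, pairMinIndicator s q' j i i' (hierData L N Z ω) ∂P =
      ∫⁻ ω, pairMinIndicator s q' k i i' (hierData L N Z ω) ∂P := by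
  have hD := measurable_hierData (L := L) hN hZ
  calc ∫⁻ ω, pairMinIndicator s q' j i i' (hierData L N Z ω) ∂P
      = ∫⁻ ω, pairMinIndicator s q' j i i' (fun t => hierData L N Z ω (Equiv.swap j k t)) ∂P :=
        (lintegral_comp_eq_of_map_eq
          (measurable_pi_lambda _ fun t => (measurable_pi_apply _).comp hD) hD
          (hexch.1 _) (measurable_pairMinIndicator hs hq j i i')).symm
    _ = ∫⁻ ω, pairMinIndicator s q' k i i' (hierData L N Z ω) ∂P := by
        simp only [pairMinIndicator_comp_perm hqinv, Equiv.swap_apply_left]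

lemma HierExch.lintegral_cond_pairMinIndicator_eq (hexch : HierExch L P N Z)
    (hN : ∀ k, Measurable (N k)) (hZ : ∀ k i, Measurable (Z k i)) (hs : Measurable s)
    (hq : Measurable q') (hqinv : HierInvariant L q') (k : Fin L) {m : ℕ}
    (hm : 0 < P {ω | N k ω = m}) {i i' : ℕ} (hii' : i < i') (hi'm : i' < m) :
    ∫⁻ ω, pairMinIndicator s q' k i i' (hierData L N Z ω) ∂P[|{ω | N k ω = m}] =
      ∫⁻ ω, pairMinIndicator s q' k 0 1 (hierData L N Z ω) ∂P[|{ω | N k ω = m}] := by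
  obtain ⟨σ, hσ0, hσ1⟩ := exists_permExt_zero_one hii' hi'm
  have hD := measurable_hierData (L := L) hN hZ
  have hZσ : ∀ k' j, Measurable
      ((fun k' i => if k' = k.1 then Z k' (permExt σ i) else Z k' i) k' j) := by
    intro k' j
    dsimp only
    split_ifs <;> exact hZ _ _
  calc ∫⁻ ω, pairMinIndicator s q' k i i' (hierData L N Z ω) ∂P[|{ω | N k ω = m}]
      = ∫⁻ ω, pairMinIndicator s q' k 0 1 (permWithin k σ (hierData L N Z ω))
          ∂P[|{ω | N k ω = m}] := by
        refine lintegral_congr_ae ?_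
        filter_upwards [ae_cond_mem (hN k (measurableSet_singleton m))] with ω hω
        rw [pairMinIndicator_permWithin hqinv hω, hσ0, hσ1]
    _ = ∫⁻ ω, pairMinIndicator s q' k 0 1 (hierData L N Z ω) ∂P[|{ω | N k ω = m}] := by
        simp only [← hierData_update_permExt]
        exact lintegral_comp_eq_of_map_eq (measurable_hierData hN hZσ) hD
          (hexch.2 k k.isLt m hm σ) (measurable_pairMinIndicator hs hq k 0 1)

lemma HierExch.lintegral_pairMinAverage_eq [IsFiniteMeasure P] (hexch : HierExch L P N Z)
    (hN : ∀ k, Measurable (N k)) (hZ : ∀ k i, Measurable (Z k i)) (hs : Measurable s)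
    (hq : Measurable q') (hqinv : HierInvariant L q') (k : Fin L)
    (hN2 : ∀ᵐ ω ∂P, 2 ≤ N k ω) :
    ∫⁻ ω, pairMinAverage s q' k (hierData L N Z ω) ∂P =
      ∫⁻ ω, pairMinIndicator s q' k 0 1 (hierData L N Z ω) ∂P := by
  have hD := measurable_hierData (L := L) hN hZ
  refine lintegral_eq_of_lintegral_cond_fiber_eq (hN k) fun m hm => ?_
  have hm2 : 2 ≤ m := by
    obtain ⟨ω, hω, hω2⟩ :=
      Measure.exists_mem_of_measure_ne_zero_of_ae hm.ne' (ae_restrict_of_ae hN2)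
    exact Set.mem_singleton_iff.mp hω ▸ hω2
  have hpairs : ((range m).sigma fun i => Ico (i + 1) m).Nonempty := ⟨⟨0, 1⟩, by simp; omega⟩
  calc ∫⁻ ω, pairMinAverage s q' k (hierData L N Z ω) ∂P[|N k ⁻¹' {m}]
      = ∫⁻ ω, (#((range m).sigma fun i => Ico (i + 1) m) : ℝ≥0∞)⁻¹ *
          ∑ p ∈ (range m).sigma fun i => Ico (i + 1) m,
          pairMinIndicator s q' k p.1 p.2 (hierData L N Z ω) ∂P[|N k ⁻¹' {m}] := by
        refine lintegral_congr_ae ?_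
        filter_upwards [ae_cond_mem (hN k (measurableSet_singleton m))] with ω hω
        have hω : N k ω = m := hω
        rw [card_sigma_range_Ico_succ, ← sum_sigma' (range m) (fun i => Ico (i + 1) m)
          fun i i' => pairMinIndicator s q' k i i' (hierData L N Z ω), ← hω]
        rfl
    _ = ∫⁻ ω, pairMinIndicator s q' k 0 1 (hierData L N Z ω) ∂P[|N k ⁻¹' {m}] :=
        lintegral_inv_card_mul_sum_eq hpairs
          (fun p _ => ((measurable_pairMinIndicator hs hq k _ _).comp hD).aemeasurable)
          fun p hp => by
            simp only [mem_sigma, mem_range, mem_Ico] at hp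
            exact hexch.lintegral_cond_pairMinIndicator_eq hN hZ hs hq hqinv k hm
              (by omega) (by omega)

end HierarchicalData

/-- **Lemma (Pairwise-minimum exchangeability identity for HCP²).**
For a hierarchically exchangeable sequence of groups all of size at least two a.s., a
fixed measurable score `s` and a measurable, hierarchically invariant function `q'` of
the full data set,
`P(min(s(Z_{K+1,1}), s(Z_{K+1,2})) ≤ q') =
   E[(1/(K+1)) Σ_k (1/C(N_k,2)) Σ_{i<i'} 1{min(s(Z_{k,i}), s(Z_{k,i'})) ≤ q'}]`. -/
theorem hcp2_exchangeability_identity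
    {𝒵 Ω : Type*} [MeasurableSpace 𝒵] [MeasurableSpace Ω]
    (P : Measure Ω) [IsProbabilityMeasure P]
    (K : ℕ)
    (N : ℕ → Ω → ℕ) (Z : ℕ → ℕ → Ω → 𝒵)
    (hN2 : ∀ k, k < K + 1 → ∀ᵐ ω ∂P, 2 ≤ N k ω)
    (hNmeas : ∀ k, Measurable (N k)) (hZmeas : ∀ k i, Measurable (Z k i))
    (hexch : HierExch (K + 1) P N Z)
    (s : 𝒵 → ℝ) (hs : Measurable s)
    (q' : (Fin (K + 1) → ℕ × (ℕ → 𝒵)) → ℝ) (hq : Measurable q')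
    (hqinv : HierInvariant (K + 1) q') :
    P {ω | min (s (Z K 0 ω)) (s (Z K 1 ω)) ≤ q' (hierData (K + 1) N Z ω)} =
      ∫⁻ ω, (((K + 1 : ℕ) : ℝ≥0∞))⁻¹ *
        ∑ k ∈ Finset.range (K + 1), (((N k ω).choose 2 : ℝ≥0∞))⁻¹ *
          ∑ i ∈ Finset.range (N k ω), ∑ i' ∈ Finset.Ico (i + 1) (N k ω),
            (if min (s (Z k i ω)) (s (Z k i' ω)) ≤ q' (hierData (K + 1) N Z ω)
              then (1 : ℝ≥0∞) else 0) ∂P := by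
  have hD := measurable_hierData (L := K + 1) hNmeas hZmeas
  have hLHS : P {ω | min (s (Z K 0 ω)) (s (Z K 1 ω)) ≤ q' (hierData (K + 1) N Z ω)} =
      ∫⁻ ω, pairMinIndicator s q' (Fin.last K) 0 1 (hierData (K + 1) N Z ω) ∂P := by
    have hmeas : MeasurableSet
        {ω | min (s (Z K 0 ω)) (s (Z K 1 ω)) ≤ q' (hierData (K + 1) N Z ω)} :=
      measurableSet_le ((hs.comp (hZmeas K 0)).min (hs.comp (hZmeas K 1))) (hq.comp hD)
    rw [← lintegral_indicator_one hmeas]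
    refine lintegral_congr fun ω => ?_
    simp [Set.indicator_apply, pairMinIndicator, hierData]
  have hcard : ((K + 1 : ℕ) : ℝ≥0∞) = (Finset.univ : Finset (Fin (K + 1))).card := by simp
  simp_rw [hLHS, hcard, Finset.sum_range (n := K + 1)]
  refine (lintegral_inv_card_mul_sum_eq Finset.univ_nonempty (fun k _ => ?_) fun k _ => ?_).symm
  · exact ((measurable_pairMinAverage hs hq k).comp hD).aemeasurable
  exact (hexch.lintegral_pairMinAverage_eq hNmeas hZmeas hs hq hqinv k (hN2 k k.isLt)).trans
    (hexch.lintegral_pairMinIndicator_eq hNmeas hZmeas hs hq hqinv k _ 0 1)
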